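/- In the finite options-framework model, the trajectory probability is the marginal of the forward variable over the currently active option: for every trajectory h of length t ≥ 1, Pr(H_t = h) = ∑_{o ∈ O} F_t(o). -/

import Mathlib

/-!
Finite options-framework model.

We fix finite nonempty types `S` (states), `A` (actions), `O` (options), an initial
distribution `d0`, a policy over options `po`, option policies `mu`, termination
functions `beta`, and a transition function `P`.  A trajectory of length `n+1` is
given by its states `s : ℕ → S` and actions `a : ℕ → A` (only indices `0..n+1`
resp. `0..n` are relevant).  Latent option sequences are `op : Fin (n+1) → O`
(for `o_0,…,o_n`) and termination sequences `τ : Fin n → Bool` (for `τ_1,…,τ_n`,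
where `τ j` corresponds to time `j+1`).
-/

open Finset

namespace OptionsModel

variable {S A O : Type} [Fintype S] [Fintype A] [Fintype O]
  [Nonempty S] [Nonempty A] [Nonempty O] [DecidableEq O]

/-- Selection factor `c_{j+1}`: if the previous option `o_j = op j.castSucc` terminates
(`τ (j+1) = 1`) at `s_{j+1}`, a new option `o_{j+1} = op j.succ` is selected by the
policy over options; otherwise the option continues. -/
def sel (po : S → O → ℝ) (beta : O → S → ℝ) (s : ℕ → S)
    {k : ℕ} (op : Fin (k + 1) → O) (τ : Fin k → Bool) (j : Fin k) : ℝ :=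
  if τ j then beta (op j.castSucc) (s (j.1 + 1)) * po (s (j.1 + 1)) (op j.succ)
  else if op j.succ = op j.castSucc then 1 - beta (op j.castSucc) (s (j.1 + 1)) else 0

/-- Latent weight `w(h,(o_i),(τ_i))` of a trajectory of length `n+1` together with the
latent option sequence `o_0,…,o_n` and termination sequence `τ_1,…,τ_n`. -/
def w (d0 : S → ℝ) (po : S → O → ℝ) (mu : O → S → A → ℝ) (beta : O → S → ℝ)
    (P : S → A → S → ℝ) (s : ℕ → S) (a : ℕ → A) {n : ℕ}
    (op : Fin (n + 1) → O) (τ : Fin n → Bool) : ℝ :=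
  d0 (s 0) * po (s 0) (op 0) * mu (op 0) (s 0) (a 0)
    * (∏ j : Fin n, P (s j.1) (a j.1) (s (j.1 + 1)) * sel po beta s op τ j
        * mu (op j.succ) (s (j.1 + 1)) (a (j.1 + 1)))
    * P (s n) (a n) (s (n + 1))

/-- Trajectory probability `Pr(H_t = h)` for the trajectory of length `t = n+1`. -/
def prH (d0 : S → ℝ) (po : S → O → ℝ) (mu : O → S → A → ℝ) (beta : O → S → ℝ)
    (P : S → A → S → ℝ) (s : ℕ → S) (a : ℕ → A) (n : ℕ) : ℝ :=
  ∑ op : Fin (n + 1) → O, ∑ τ : Fin n → Bool, w d0 po mu beta P s a op τ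

/-- Joint termination probability `Pr(T_t = 1, H_t = h)` for `t = n+1`. -/
def prT1H (d0 : S → ℝ) (po : S → O → ℝ) (mu : O → S → A → ℝ) (beta : O → S → ℝ)
    (P : S → A → S → ℝ) (s : ℕ → S) (a : ℕ → A) (n : ℕ) : ℝ :=
  ∑ op : Fin (n + 1) → O, ∑ τ : Fin n → Bool,
    w d0 po mu beta P s a op τ * beta (op (Fin.last n)) (s (n + 1))

/-- Joint no-termination probability `Pr(T_t = 0, H_t = h)` for `t = n+1`. -/
def prT0H (d0 : S → ℝ) (po : S → O → ℝ) (mu : O → S → A → ℝ) (beta : O → S → ℝ)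
    (P : S → A → S → ℝ) (s : ℕ → S) (a : ℕ → A) (n : ℕ) : ℝ :=
  ∑ op : Fin (n + 1) → O, ∑ τ : Fin n → Bool,
    w d0 po mu beta P s a op τ * (1 - beta (op (Fin.last n)) (s (n + 1)))

/-- `Pr(O_{t-1} = o, H_t = h)` for `t = n+1`: the latent-weight sum restricted to option
sequences whose last option `o_{t-1}` equals `o`. -/
def prOlastH (d0 : S → ℝ) (po : S → O → ℝ) (mu : O → S → A → ℝ) (beta : O → S → ℝ)
    (P : S → A → S → ℝ) (s : ℕ → S) (a : ℕ → A) (n : ℕ) (o : O) : ℝ :=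
  ∑ op : Fin (n + 1) → O, ∑ τ : Fin n → Bool,
    if op (Fin.last n) = o then w d0 po mu beta P s a op τ else 0

/-- The forward variable `F_m(o)`: `F_0(o) = d0(s_0)·π(s_0,o)` and, for `m ≥ 1`, the sum
over option sequences `o_0,…,o_m` with `o_m = o` and termination sequences `τ_1,…,τ_m`
of `d0(s_0)·π(s_0,o_0)·(∏_{i=0}^{m-1} μ_{o_i}(s_i,a_i)·P(s_i,a_i,s_{i+1}))·(∏_{i=1}^m c_i)`. -/
def fwd (d0 : S → ℝ) (po : S → O → ℝ) (mu : O → S → A → ℝ) (beta : O → S → ℝ)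
    (P : S → A → S → ℝ) (s : ℕ → S) (a : ℕ → A) : ℕ → O → ℝ
  | 0, o => d0 (s 0) * po (s 0) o
  | m + 1, o =>
    ∑ op : Fin (m + 2) → O, ∑ τ : Fin (m + 1) → Bool,
      if op (Fin.last (m + 1)) = o then
        d0 (s 0) * po (s 0) (op 0)
          * (∏ j : Fin (m + 1),
              mu (op j.castSucc) (s j.1) (a j.1) * P (s j.1) (a j.1) (s (j.1 + 1)))
          * (∏ j : Fin (m + 1), sel po beta s op τ j)
      else 0

/-- `Pr(O_t = o, T_t = 0, H_t = h_t)` for `t = n+1`: the `F_t(o)` sum restricted to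
termination sequences with `τ_t = 0`. -/
def prOT0H (d0 : S → ℝ) (po : S → O → ℝ) (mu : O → S → A → ℝ) (beta : O → S → ℝ)
    (P : S → A → S → ℝ) (s : ℕ → S) (a : ℕ → A) (n : ℕ) (o : O) : ℝ :=
  ∑ op : Fin (n + 2) → O, ∑ τ : Fin (n + 1) → Bool,
    if op (Fin.last (n + 1)) = o ∧ τ (Fin.last n) = false then
      d0 (s 0) * po (s 0) (op 0)
        * (∏ j : Fin (n + 1),
            mu (op j.castSucc) (s j.1) (a j.1) * P (s j.1) (a j.1) (s (j.1 + 1)))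
        * (∏ j : Fin (n + 1), sel po beta s op τ j)
    else 0

/-- The recursive function `f(h,o,i)` of Theorem 2: `f(h,o,i) = 1` for `i ≥ t` and
otherwise the termination/continuation recursion. -/
def fRec (po : S → O → ℝ) (mu : O → S → A → ℝ) (beta : O → S → ℝ)
    (s : ℕ → S) (a : ℕ → A) (t : ℕ) (o : O) (i : ℕ) : ℝ :=
  if h : t ≤ i then 1
  else
    beta o (s i) * (∑ o' : O, po (s i) o' * mu o' (s i) (a i) * fRec po mu beta s a t o' (i + 1))
      + (1 - beta o (s i)) * mu o (s i) (a i) * fRec po mu beta s a t o (i + 1)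
termination_by t - i
decreasing_by all_goals omega

/-- The option active at time `i + j - 1` just before choosing `o_{i+j}`: it is `o` when
`j = 0` (the given previous option) and `op (j-1)` otherwise. -/
def prevOp {k : ℕ} (o : O) (op : Fin k → O) (j : Fin k) : O :=
  if _ : j.1 = 0 then o else op ⟨j.1 - 1, Nat.lt_of_le_of_lt (Nat.sub_le _ _) j.2⟩

/-- Suffix probability `G(h,o,i)` for `1 ≤ i ≤ t`: the probability of generating
`(s_i,a_i,…,s_t)` given previous state `s_{i-1}`, active option `o` and previous action
`a_{i-1}`.  For `i = t` it is `P(s_{t-1},a_{t-1},s_t)`; for `i < t` it is the sum over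
latent option sequences `o_i,…,o_{t-1}` and termination indicators `τ_i,…,τ_{t-1}`
(with `o_{i-1} := o`) of `(∏_{j=i}^{t-1} P(s_{j-1},a_{j-1},s_j)·c_j·μ_{o_j}(s_j,a_j))
· P(s_{t-1},a_{t-1},s_t)`. -/
def G (po : S → O → ℝ) (mu : O → S → A → ℝ) (beta : O → S → ℝ)
    (P : S → A → S → ℝ) (s : ℕ → S) (a : ℕ → A) (t i : ℕ) (o : O) : ℝ :=
  if i < t then
    ∑ op : Fin (t - i) → O, ∑ τ : Fin (t - i) → Bool,
      (∏ j : Fin (t - i),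
          P (s (i + j.1 - 1)) (a (i + j.1 - 1)) (s (i + j.1))
            * (if τ j then
                beta (prevOp o op j) (s (i + j.1)) * po (s (i + j.1)) (op j)
              else if op j = prevOp o op j then 1 - beta (prevOp o op j) (s (i + j.1))
              else 0)
            * mu (op j) (s (i + j.1)) (a (i + j.1)))
        * P (s (t - 1)) (a (t - 1)) (s t)
  else P (s (t - 1)) (a (t - 1)) (s t)

variable (d0 : S → ℝ) (po : S → O → ℝ) (mu : O → S → A → ℝ)
  (beta : O → S → ℝ) (P : S → A → S → ℝ) (s : ℕ → S) (a : ℕ → A)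

/-!
Summing `F_t(o)` over `o` lifts the constraint on the last option, leaving a sum over all
`o_0,…,o_t` and `τ_1,…,τ_t`.  Splitting off `(o_t, τ_t)`, each summand factors as the latent
weight of the shorter latent sequences times the last selection factor `c_t`, and `c_t` sums to
`β·∑_o π(s_t,o) + (1 - β) = 1` over `(o_t, τ_t)`.
-/

theorem sum_fun_fin_succ {M X : Type*} [AddCommMonoid M] [Fintype X] {k : ℕ}
    (g : (Fin (k + 1) → X) → M) :
    ∑ f : Fin (k + 1) → X, g f = ∑ f : Fin k → X, ∑ x : X, g (Fin.snoc f x) := by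
  rw [← (Fin.snocEquiv fun _ => X).sum_comp g, Fintype.sum_prod_type, Finset.sum_comm]
  rfl

def fwdWeight {m : ℕ} (op : Fin (m + 2) → O) (τ : Fin (m + 1) → Bool) : ℝ :=
  d0 (s 0) * po (s 0) (op 0)
    * (∏ j : Fin (m + 1), mu (op j.castSucc) (s j.1) (a j.1) * P (s j.1) (a j.1) (s (j.1 + 1)))
    * (∏ j : Fin (m + 1), sel po beta s op τ j)

omit [Fintype S] [Fintype A] [Nonempty S] [Nonempty A] [Nonempty O] in
theorem sum_fwd_succ (m : ℕ) :
    ∑ o : O, fwd d0 po mu beta P s a (m + 1) o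
      = ∑ op : Fin (m + 2) → O, ∑ τ : Fin (m + 1) → Bool, fwdWeight d0 po mu beta P s a op τ := by
  simp only [fwd, fwdWeight]
  rw [Finset.sum_comm]
  refine Finset.sum_congr rfl fun op _ => ?_
  rw [Finset.sum_comm]
  simp

omit [Fintype S] [Fintype O] [Nonempty S] [Nonempty O] in
theorem sel_snoc_castSucc {n : ℕ} (op : Fin (n + 1) → O) (o : O) (τ : Fin n → Bool) (b : Bool)
    (j : Fin n) :
    sel po beta s (Fin.snoc op o : Fin (n + 2) → O) (Fin.snoc τ b) j.castSucc
      = sel po beta s op τ j := by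
  simp [sel, Fin.snoc_castSucc, Fin.succ_castSucc, -Fin.castSucc_succ]

omit [Fintype S] [Nonempty S] [Nonempty O] in
theorem sum_sel_snoc_last {n : ℕ} (hpos : ∑ o : O, po (s (n + 1)) o = 1)
    (op : Fin (n + 1) → O) (τ : Fin n → Bool) :
    ∑ o : O, ∑ b : Bool, sel po beta s (Fin.snoc op o : Fin (n + 2) → O) (Fin.snoc τ b) (Fin.last n)
      = 1 := by
  have hlast : (Fin.last n).succ = Fin.last (n + 1) := rfl
  simp only [sel, hlast, Fin.snoc_castSucc, Fin.snoc_last, Fintype.sum_bool, Finset.sum_add_distrib]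
  simp [← Finset.mul_sum, hpos]

omit [Fintype S] [Fintype A] [Fintype O] [Nonempty S] [Nonempty A] [Nonempty O] in
theorem fwdWeight_snoc {n : ℕ} (op : Fin (n + 1) → O) (o : O) (τ : Fin n → Bool) (b : Bool) :
    fwdWeight d0 po mu beta P s a (Fin.snoc op o : Fin (n + 2) → O) (Fin.snoc τ b)
      = w d0 po mu beta P s a op τ
        * sel po beta s (Fin.snoc op o : Fin (n + 2) → O) (Fin.snoc τ b) (Fin.last n) := by
  have hzero : (0 : Fin (n + 2)) = (0 : Fin (n + 1)).castSucc := rfl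
  have hmu : ∏ j : Fin (n + 1), mu (op j) (s j.1) (a j.1)
      = mu (op 0) (s 0) (a 0) * ∏ j : Fin n, mu (op j.succ) (s (j.1 + 1)) (a (j.1 + 1)) :=
    Fin.prod_univ_succ _
  have hP : ∏ j : Fin (n + 1), P (s j.1) (a j.1) (s (j.1 + 1))
      = (∏ j : Fin n, P (s j.1) (a j.1) (s (j.1 + 1))) * P (s n) (a n) (s (n + 1)) :=
    Fin.prod_univ_castSucc _
  rw [fwdWeight, w, Fin.prod_univ_castSucc (f := sel po beta s _ _)]
  simp only [hzero, Fin.snoc_castSucc, sel_snoc_castSucc, Finset.prod_mul_distrib, hmu, hP]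
  ring

theorem trajectory_prob_forward_marginal
    (hpos : ∀ x : S, ∑ o : O, po x o = 1)
    (n : ℕ) :
    prH d0 po mu beta P s a n = ∑ o : O, fwd d0 po mu beta P s a (n + 1) o := by
  calc prH d0 po mu beta P s a n
      = ∑ op : Fin (n + 1) → O, ∑ τ : Fin n → Bool, w d0 po mu beta P s a op τ
          * ∑ o : O, ∑ b : Bool,
              sel po beta s (Fin.snoc op o : Fin (n + 2) → O) (Fin.snoc τ b) (Fin.last n) := by
        simp only [sum_sel_snoc_last po beta s (hpos _), mul_one, prH]
    _ = ∑ op : Fin (n + 1) → O, ∑ o : O, ∑ τ : Fin n → Bool, ∑ b : Bool,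
          fwdWeight d0 po mu beta P s a (Fin.snoc op o : Fin (n + 2) → O) (Fin.snoc τ b) := by
        simp only [fwdWeight_snoc, Finset.mul_sum]
        exact Finset.sum_congr rfl fun op _ => Finset.sum_comm
    _ = ∑ o : O, fwd d0 po mu beta P s a (n + 1) o := by
        simp only [sum_fwd_succ, sum_fun_fin_succ]

end OptionsModel
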